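/- arXiv:2311.15350 — 3 statements merged into one kernel-verified Lean document; each statement's English description precedes it below -/
import Mathlib

section
/- (Properties of normalized generalized Young functions) Let φ be a normalized generalized Young function on ℝⁿ with constant β ∈ (0,1]. Then: (i) φ(x,t) ≤ φ(y, t/β) for every t ∈ [0, β φ⁻¹(y, |B|⁻¹)], for a.e. x,y ∈ B and every ball B ⊂ ℝⁿ; (ii) (β/2) φ̃⁻¹(x,t) ≤ φ̃⁻¹(y,t) for every t ∈ [0, |B|⁻¹], for a.e. x,y ∈ B and every ball B ⊂ ℝⁿ; (iii) φ̃(x,t) ≤ φ̃(y, 2t/β) for every t ∈ [0, (β/2) φ̃⁻¹(y, |B|⁻¹)], for a.e. x,y ∈ B and every ball B ⊂ ℝⁿ. -/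
open MeasureTheory Metric Filter Set
open scoped ENNReal Topology RealInnerProductSpace

noncomputable section

variable {n : ℕ}

/-- Euclidean space `ℝⁿ`. -/
abbrev Euc (n : ℕ) := EuclideanSpace ℝ (Fin n)

/-- A Young function: convex, continuous, non-constant, vanishing at `0`,
with values in `[0,∞]`, regarded on `[0,∞)`. -/
def IsYoung (A : ℝ → ℝ≥0∞) : Prop :=
  A 0 = 0 ∧ ContinuousOn A (Ici (0:ℝ)) ∧
  (∀ s ∈ Ici (0:ℝ), ∀ t ∈ Ici (0:ℝ), ∀ θ : ℝ, 0 ≤ θ → θ ≤ 1 →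
    A (θ * s + (1 - θ) * t) ≤ ENNReal.ofReal θ * A s + ENNReal.ofReal (1 - θ) * A t) ∧
  ¬ (∀ s ∈ Ici (0:ℝ), ∀ t ∈ Ici (0:ℝ), A s = A t)

/-- A generalized Young function on `ℝⁿ`. -/
def IsGYoung (φ : Euc n → ℝ → ℝ≥0∞) : Prop :=
  (∀ᵐ x : Euc n, IsYoung (φ x)) ∧ ∀ t : ℝ, 0 ≤ t → Measurable fun x => φ x t

/-- The left-continuous inverse `φ⁻¹(x,t) = inf {τ ≥ 0 : φ(x,τ) ≥ t}`. -/
def gyInv (φ : Euc n → ℝ → ℝ≥0∞) (x : Euc n) (t : ℝ) : ℝ :=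
  sInf {τ : ℝ | 0 ≤ τ ∧ ENNReal.ofReal t ≤ φ x τ}

/-- The Young conjugate `φ̃(x,t) = sup {τ t − φ(x,τ) : τ ≥ 0}`. -/
def gyConj (φ : Euc n → ℝ → ℝ≥0∞) (x : Euc n) (t : ℝ) : ℝ≥0∞ :=
  ⨆ τ : {τ : ℝ // 0 ≤ τ}, (ENNReal.ofReal (τ.1 * t) - φ x τ.1)

/-- The Luxemburg norm of `u` on `Ω` associated with `φ`. -/
def luxNorm (φ : Euc n → ℝ → ℝ≥0∞) (Ω : Set (Euc n)) (u : Euc n → ℝ) : ℝ≥0∞ :=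
  sInf {l : ℝ≥0∞ | ∃ lam : ℝ, 0 < lam ∧ l = ENNReal.ofReal lam ∧
    (∫⁻ x in Ω, φ x (|u x| / lam)) ≤ 1}

/-- Membership in the Musielak–Orlicz space `L^{φ(·)}(Ω)`. -/
def MemLphi (φ : Euc n → ℝ → ℝ≥0∞) (Ω : Set (Euc n)) (u : Euc n → ℝ) : Prop :=
  AEMeasurable u (volume.restrict Ω) ∧
  ∃ lam : ℝ, 0 < lam ∧ (∫⁻ x in Ω, φ x (|u x| / lam)) < ⊤

/-- Condition (A0) with constant `β`. -/
def CondA0 (φ : Euc n → ℝ → ℝ≥0∞) (β : ℝ) : Prop :=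
  0 < β ∧ β ≤ 1 ∧ ∀ᵐ x : Euc n, β ≤ gyInv φ x 1 ∧ gyInv φ x 1 ≤ 1 / β

/-- Condition (A1) with constant `β`. -/
def CondA1 (φ : Euc n → ℝ → ℝ≥0∞) (β : ℝ) : Prop :=
  0 < β ∧ β ≤ 1 ∧ ∀ c : Euc n, ∀ r : ℝ, 0 < r → volume (ball c r) ≤ 1 →
    ∀ᵐ x ∂volume.restrict (ball c r), ∀ᵐ y ∂volume.restrict (ball c r),
      ∀ t : ℝ, 1 ≤ t → t ≤ ((volume (ball c r)).toReal)⁻¹ →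
        β * gyInv φ x t ≤ gyInv φ y t

/-- Condition (A2). -/
def CondA2 (φ : Euc n → ℝ → ℝ≥0∞) : Prop :=
  ∀ s : ℝ, 0 < s → ∃ β : ℝ, ∃ h : Euc n → ℝ, 0 < β ∧ β ≤ 1 ∧
    Integrable h volume ∧ MemLp h ⊤ volume ∧
    ∀ᵐ x : Euc n, ∀ᵐ y : Euc n, ∀ t : ℝ, h x + h y ≤ t → t ≤ s →
      β * gyInv φ x t ≤ gyInv φ y t

/-- `limsup` of `f(x)` as `|x| → ∞`. -/
def limsupInfty (f : Euc n → ℝ≥0∞) : ℝ≥0∞ :=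
  Filter.limsup f (Filter.comap (fun x : Euc n => ‖x‖) Filter.atTop)

/-- `φ_∞(t) = limsup_{|x|→∞} φ(x,t)`. -/
def gyInfty (φ : Euc n → ℝ → ℝ≥0∞) (t : ℝ) : ℝ≥0∞ :=
  limsupInfty (fun x => φ x t)

/-- The function `φ₀(x,t) = max {φ(x, φ⁻¹(x,1) t), 2t − 1}`. -/
def gyZero (φ : Euc n → ℝ → ℝ≥0∞) (x : Euc n) (t : ℝ) : ℝ≥0∞ :=
  max (φ x (gyInv φ x 1 * t)) (ENNReal.ofReal (2 * t - 1))

/-- The normalized function `φ̄`. -/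
def gyBar (φ : Euc n → ℝ → ℝ≥0∞) (x : Euc n) (t : ℝ) : ℝ≥0∞ :=
  if 1 ≤ t then 2 * gyZero φ x t - 1 else limsupInfty (fun x' => gyZero φ x' t)

/-- The function `φ̂`. -/
def gyHat (φ : Euc n → ℝ → ℝ≥0∞) (x : Euc n) (t : ℝ) : ℝ≥0∞ :=
  if 1 ≤ t then 2 * gyZero φ x t - 1 else ENNReal.ofReal t

/-- The convergence condition `∫₀ (t/φ_∞(t))^p dt < ∞` near zero. -/
def ConvCondZero (φ : Euc n → ℝ → ℝ≥0∞) (p : ℝ) : Prop :=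
  ∃ ε : ℝ, 0 < ε ∧ (∫⁻ t in Ioc (0:ℝ) ε, (ENNReal.ofReal t / gyInfty φ t) ^ p) < ⊤

/-- `H(x,t) = (∫₀ᵗ (τ/ψ(x,τ))^p dτ)^q`. -/
def Hfun (ψ : Euc n → ℝ → ℝ≥0∞) (p q : ℝ) (x : Euc n) (t : ℝ) : ℝ≥0∞ :=
  (∫⁻ τ in Ioc (0:ℝ) t, (ENNReal.ofReal τ / ψ x τ) ^ p) ^ q

def HinvSet (ψ : Euc n → ℝ → ℝ≥0∞) (p q : ℝ) (x : Euc n) (t : ℝ) : Set ℝ :=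
  {s : ℝ | 0 ≤ s ∧ ENNReal.ofReal t ≤ Hfun ψ p q x s}

/-- The left-continuous inverse of `H(x,·)`. -/
def Hinv (ψ : Euc n → ℝ → ℝ≥0∞) (p q : ℝ) (x : Euc n) (t : ℝ) : ℝ :=
  sInf (HinvSet ψ p q x t)

open scoped Classical in
/-- The Sobolev conjugate `ψ(x, H⁻¹(x,t))`, interpreted as `∞` when `t` exceeds
the limit of `H(x,·)`. -/
def sobConj (ψ : Euc n → ℝ → ℝ≥0∞) (p q : ℝ) (x : Euc n) (t : ℝ) : ℝ≥0∞ :=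
  if (HinvSet ψ p q x t).Nonempty then ψ x (Hinv ψ p q x t) else ⊤

/-- `v` is the weak (distributional) gradient of `u` on the open set `Ω`. -/
def HasWeakGradOn (Ω : Set (Euc n)) (u : Euc n → ℝ) (v : Euc n → Euc n) : Prop :=
  LocallyIntegrableOn u Ω volume ∧ LocallyIntegrableOn v Ω volume ∧
  ∀ ψ : Euc n → ℝ, ContDiff ℝ (⊤ : ℕ∞) ψ → HasCompactSupport ψ → tsupport ψ ⊆ Ω →
    ∀ y : Euc n,
      (∫ x in Ω, u x * fderiv ℝ ψ x y) = - ∫ x in Ω, ψ x * ⟪v x, y⟫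

/-- Decay near infinity: all superlevel sets of `|u|` have finite measure. -/
def Decays (u : Euc n → ℝ) : Prop :=
  ∀ t : ℝ, 0 < t → volume {x : Euc n | t < |u x|} < ⊤

/-- Bounded John domain. -/
def IsBoundedJohnDomain (Ω : Set (Euc n)) : Prop :=
  IsOpen Ω ∧ Bornology.IsBounded Ω ∧
  ∃ c : ℝ, 0 < c ∧ ∃ ℓ : ℝ, 0 < ℓ ∧ ∃ x₀ ∈ Ω, ∀ x ∈ Ω, ∃ γ : ℝ → Euc n,
    γ 0 = x ∧ γ ℓ = x₀ ∧ (∀ r ∈ Icc (0:ℝ) ℓ, γ r ∈ Ω) ∧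
    (∀ r ∈ Icc (0:ℝ) ℓ, ∀ s ∈ Icc (0:ℝ) ℓ, dist (γ r) (γ s) ≤ |r - s|) ∧
    ∀ r ∈ Icc (0:ℝ) ℓ, c * r ≤ Metric.infDist (γ r) (frontier Ω)

/-- A normalized generalized Young function with constant `β`. -/
def IsNormalizedGY (φ : Euc n → ℝ → ℝ≥0∞) (β : ℝ) : Prop :=
  IsGYoung φ ∧ 0 < β ∧ β ≤ 1 ∧
  (∀ᵐ x : Euc n, gyInv φ x 1 = 1) ∧
  (∀ c : Euc n, ∀ r : ℝ, 0 < r →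
    ∀ᵐ x ∂volume.restrict (ball c r), ∀ᵐ y ∂volume.restrict (ball c r),
      ∀ t : ℝ, 0 ≤ t → t ≤ ((volume (ball c r)).toReal)⁻¹ →
        β * gyInv φ x t ≤ gyInv φ y t) ∧
  (∀ x : Euc n, ∀ t ∈ Icc (0:ℝ) 1, φ x t = gyInfty φ t)

/-- The measure `ω_n` of the unit ball of `ℝⁿ`. -/
def omegaN (n : ℕ) : ℝ := (volume (ball (0 : Euc n) 1)).toReal

/-- `ψ(x,t) = σ t^{n/(n−α)} ∫₀ᵗ φ̃(x,kτ) / τ^{1+n/(n−α)} dτ`. -/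
def psiFun (φ : Euc n → ℝ → ℝ≥0∞) (α k σ : ℝ) (x : Euc n) (t : ℝ) : ℝ≥0∞ :=
  ENNReal.ofReal σ * ENNReal.ofReal t ^ ((n:ℝ)/((n:ℝ)-α)) *
    ∫⁻ τ in Ioc (0:ℝ) t, gyConj φ x (k * τ) / ENNReal.ofReal τ ^ (1 + (n:ℝ)/((n:ℝ)-α))

/-- The left-continuous inverse of `ψ(x,·)`. -/
def psiInv (φ : Euc n → ℝ → ℝ≥0∞) (α k σ : ℝ) (x : Euc n) (s : ℝ) : ℝ :=
  sInf {τ : ℝ | 0 ≤ τ ∧ ENNReal.ofReal s ≤ psiFun φ α k σ x τ}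

/-- `λ(x,δ) = 1/(δ^{n−α} ψ⁻¹(x, δ^{−n}))` for `δ > 0`. -/
def lamFunPos (φ : Euc n → ℝ → ℝ≥0∞) (α k σ : ℝ) (x : Euc n) (δ : ℝ) : ℝ≥0∞ :=
  (ENNReal.ofReal (δ ^ ((n:ℝ) - α) * psiInv φ α k σ x (δ ^ (-(n:ℝ)))))⁻¹

/-- `λ(x,δ)`, extended by its limit at `δ = 0`. -/
def lamFun (φ : Euc n → ℝ → ℝ≥0∞) (α k σ : ℝ) (x : Euc n) (δ : ℝ) : ℝ≥0∞ :=
  if 0 < δ then lamFunPos φ α k σ x δ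
  else Filter.limsup (fun d => lamFunPos φ α k σ x d) (𝓝[>] (0:ℝ))

/-- `ω(x,t) = λ(x, φ(x,t)^{−1/n})`. -/
def omegaFun (φ : Euc n → ℝ → ℝ≥0∞) (α k σ : ℝ) (x : Euc n) (t : ℝ) : ℝ≥0∞ :=
  lamFun φ α k σ x (((φ x t)⁻¹ ^ ((1:ℝ)/(n:ℝ))).toReal)

/-- The centered Hardy–Littlewood maximal function. -/
def maxFun (f : Euc n → ℝ) (x : Euc n) : ℝ≥0∞ :=
  ⨆ r : {r : ℝ // 0 < r},
    (volume (ball x r.1))⁻¹ * ∫⁻ y in ball x r.1, ENNReal.ofReal |f y|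

/-- The mean value of `|g|` over a set `B`. -/
def avgAbs (B : Set (Euc n)) (g : Euc n → ℝ) : ℝ≥0∞ :=
  (volume B)⁻¹ * ∫⁻ y in B, ENNReal.ofReal |g y|

/-- The Riesz potential `I_α f`. -/
def rieszPot (α : ℝ) (f : Euc n → ℝ) (x : Euc n) : ℝ :=
  ∫ y : Euc n, f y / ‖x - y‖ ^ ((n:ℝ) - α)

/-- `ϑ` grows essentially more slowly than `ψ` near infinity in `Ω`. -/
def GrowsSlower (ϑ ψ : Euc n → ℝ → ℝ≥0∞) (Ω : Set (Euc n)) : Prop :=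
  ∀ c : ℝ, 0 < c →
    Tendsto (fun t : ℝ => essSup (fun x => ϑ x (c * t) / ψ x t) (volume.restrict Ω))
      atTop (𝓝 (0 : ℝ≥0∞))

end

noncomputable section AuxYoung

/-- inverse of a single Young function -/
def inv1 (A : ℝ → ℝ≥0∞) (t : ℝ) : ℝ :=
  sInf {τ : ℝ | 0 ≤ τ ∧ ENNReal.ofReal t ≤ A τ}

/-- conjugate of a single Young function -/
def conj1 (A : ℝ → ℝ≥0∞) (t : ℝ) : ℝ≥0∞ :=
  ⨆ τ : {τ : ℝ // 0 ≤ τ}, (ENNReal.ofReal (τ.1 * t) - A τ.1)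

variable {A : ℝ → ℝ≥0∞} {t τ : ℝ}

lemma inv1_bddBelow (A : ℝ → ℝ≥0∞) (t : ℝ) :
    BddBelow {τ : ℝ | 0 ≤ τ ∧ ENNReal.ofReal t ≤ A τ} := ⟨0, fun _ hx => hx.1⟩

lemma inv1_nonneg (A : ℝ → ℝ≥0∞) (t : ℝ) : 0 ≤ inv1 A t :=
  Real.sInf_nonneg fun _ hx => hx.1

lemma inv1_le (hτ : 0 ≤ τ) (h : ENNReal.ofReal t ≤ A τ) : inv1 A t ≤ τ :=
  csInf_le (inv1_bddBelow A t) ⟨hτ, h⟩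

lemma lt_inv1 (hτ : 0 ≤ τ) (h : τ < inv1 A t) : A τ < ENNReal.ofReal t := by
  by_contra hc
  exact absurd (inv1_le hτ (not_lt.1 hc)) (not_le.2 h)

lemma inv1_zero (A : ℝ → ℝ≥0∞) : inv1 A 0 = 0 := by
  have : {τ : ℝ | 0 ≤ τ ∧ ENNReal.ofReal 0 ≤ A τ} = Ici (0:ℝ) := by
    ext τ; simp [mem_Ici]
  rw [inv1, this, csInf_Ici]

lemma young_mono (hA : IsYoung A) {s t : ℝ} (hs : 0 ≤ s) (hst : s ≤ t) : A s ≤ A t := by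
  rcases eq_or_lt_of_le (hs.trans hst) with h0 | h0
  · obtain rfl : s = 0 := le_antisymm (hst.trans h0.symm.le) hs
    obtain rfl : t = 0 := h0.symm
    exact le_rfl
  · have ht : (0:ℝ) < t := h0
    have key := hA.2.2.1 t (mem_Ici.2 ht.le) 0 (mem_Ici.2 le_rfl) (s / t) (by positivity) (by
      rw [div_le_one ht]; exact hst)
    have heq : s / t * t + (1 - s / t) * 0 = s := by field_simp; ring
    rw [heq, hA.1, mul_zero, add_zero] at key
    calc A s ≤ ENNReal.ofReal (s / t) * A t := key
      _ ≤ 1 * A t := by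
          gcongr
          exact ENNReal.ofReal_le_one.2 (by rw [div_le_one ht]; exact hst)
      _ = A t := one_mul _

lemma young_scale (hA : IsYoung A) {θ s : ℝ} (hθ0 : 0 ≤ θ) (hθ1 : θ ≤ 1) (hs : 0 ≤ s) :
    A (θ * s) ≤ ENNReal.ofReal θ * A s := by
  have key := hA.2.2.1 s (mem_Ici.2 hs) 0 (mem_Ici.2 le_rfl) θ hθ0 hθ1
  rwa [hA.1, mul_zero, add_zero, mul_zero, add_zero] at key

/-- Young functions are unbounded: the set defining `inv1` is nonempty. -/
lemma young_unbounded (hA : IsYoung A) (t : ℝ) :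
    ∃ τ : ℝ, 0 ≤ τ ∧ ENNReal.ofReal t ≤ A τ := by
  rcases le_or_gt t 0 with ht | ht
  · exact ⟨0, le_rfl, by simp [ENNReal.ofReal_eq_zero.2 ht]⟩
  -- find s₀ with A s₀ ≠ 0
  have hnc := hA.2.2.2
  push_neg at hnc
  obtain ⟨s, hs, u, hu, hsu⟩ := hnc
  have hex : ∃ s₀ : ℝ, 0 < s₀ ∧ A s₀ ≠ 0 := by
    by_contra hno
    push_neg at hno
    have hall : ∀ v ∈ Ici (0:ℝ), A v = 0 := by
      intro v hv
      rcases eq_or_lt_of_le (mem_Ici.1 hv) with h | h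
      · rw [← h]; exact hA.1
      · exact hno v h
    exact hsu ((hall s hs).trans (hall u hu).symm)
  obtain ⟨s₀, hs₀, hA₀⟩ := hex
  rcases eq_or_ne (A s₀) ⊤ with htop | htop
  · exact ⟨s₀, hs₀.le, by simp [htop]⟩
  set c := (A s₀).toReal with hc
  have hc0 : 0 < c := ENNReal.toReal_pos hA₀ htop
  set τ := s₀ * (t / c + 1) with hτ
  have hτs : s₀ ≤ τ := by nlinarith [div_pos ht hc0]
  have hτpos : 0 < τ := hs₀.trans_le hτs
  refine ⟨τ, hτpos.le, ?_⟩
  have hkey := young_scale hA (θ := s₀ / τ) (s := τ) (by positivity)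
    (by rw [div_le_one hτpos]; exact hτs) hτpos.le
  have heq : s₀ / τ * τ = s₀ := by field_simp
  rw [heq] at hkey
  -- A s₀ ≤ ofReal (s₀/τ) * A τ, multiply both sides by ofReal (τ/s₀)
  have h2 : ENNReal.ofReal (τ / s₀) * A s₀ ≤ ENNReal.ofReal (τ / s₀) * (ENNReal.ofReal (s₀ / τ) * A τ) :=
    mul_le_mul_right hkey _
  have h3 : ENNReal.ofReal (τ / s₀) * ENNReal.ofReal (s₀ / τ) = 1 := by
    rw [← ENNReal.ofReal_mul (by positivity)]
    rw [show τ / s₀ * (s₀ / τ) = 1 by field_simp]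
    simp
  rw [← mul_assoc, h3, one_mul] at h2
  refine le_trans ?_ h2
  have hAc : A s₀ = ENNReal.ofReal c := by rw [hc, ENNReal.ofReal_toReal htop]
  rw [hAc, ← ENNReal.ofReal_mul (by positivity)]
  apply ENNReal.ofReal_le_ofReal
  have : τ / s₀ * c = t + c := by
    rw [hτ]
    field_simp
  rw [this]; linarith

lemma inv1_set_closed (hA : IsYoung A) (t : ℝ) :
    IsClosed {τ : ℝ | 0 ≤ τ ∧ ENNReal.ofReal t ≤ A τ} := by
  have : {τ : ℝ | 0 ≤ τ ∧ ENNReal.ofReal t ≤ A τ}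
      = Ici (0:ℝ) ∩ A ⁻¹' (Ici (ENNReal.ofReal t)) := by
    ext τ; simp [mem_Ici, and_comm]
  rw [this]
  exact hA.2.1.preimage_isClosed_of_isClosed isClosed_Ici isClosed_Ici

lemma inv1_mem (hA : IsYoung A) (t : ℝ) :
    ENNReal.ofReal t ≤ A (inv1 A t) := by
  have hne : {τ : ℝ | 0 ≤ τ ∧ ENNReal.ofReal t ≤ A τ}.Nonempty := young_unbounded hA t
  have := (inv1_set_closed hA t).csInf_mem hne (inv1_bddBelow A t)
  exact this.2

lemma inv1_pos (hA : IsYoung A) (ht : 0 < t) : 0 < inv1 A t := by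
  rcases eq_or_lt_of_le (inv1_nonneg A t) with h0 | h0
  · exfalso
    have := inv1_mem hA t
    rw [← h0, hA.1] at this
    simp only [nonpos_iff_eq_zero, ENNReal.ofReal_eq_zero] at this
    linarith
  · exact h0

lemma inv1_mono (hA : IsYoung A) {t t' : ℝ} (h : t ≤ t') : inv1 A t ≤ inv1 A t' := by
  apply csInf_le_csInf (inv1_bddBelow A t) (young_unbounded hA t')
  rintro τ ⟨hτ0, hτ⟩
  exact ⟨hτ0, le_trans (ENNReal.ofReal_le_ofReal h) hτ⟩

/-- left limit bound for continuous Young functions -/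
lemma young_left_lim (hA : IsYoung A) (ht : 0 < t) {L : ℝ≥0∞}
    (h : ∀ τ, 0 ≤ τ → τ < t → A τ ≤ L) : A t ≤ L := by
  have hc : ContinuousWithinAt A (Ici 0) t := hA.2.1 t (mem_Ici.2 ht.le)
  have hc2 : Tendsto A (𝓝[Ioo 0 t] t) (𝓝 (A t)) :=
    (hc.mono fun x hx => le_of_lt hx.1).tendsto
  haveI : (𝓝[Ioo (0:ℝ) t] t).NeBot := right_nhdsWithin_Ioo_neBot ht
  exact le_of_tendsto hc2 (eventually_of_mem self_mem_nhdsWithin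
    fun τ hτ => h τ hτ.1.le hτ.2)

end AuxYoung

section Claims
open ENNReal in
/-- term bound: Young inequality from the definition of the conjugate -/
lemma conj1_young {A : ℝ → ℝ≥0∞} {τ σ : ℝ} (hτ : 0 ≤ τ) :
    ENNReal.ofReal (τ * σ) ≤ conj1 A σ + A τ := by
  have h : ENNReal.ofReal (τ * σ) - A τ ≤ conj1 A σ :=
    le_iSup (fun τ' : {τ' : ℝ // 0 ≤ τ'} => ENNReal.ofReal (τ'.1 * σ) - A τ'.1) ⟨τ, hτ⟩
  exact tsub_le_iff_right.1 h

/-- Claim 1: `inv1 A t * inv1 (conj1 A) t ≤ 2 t`. -/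
lemma inv1_mul_conj_le (A : ℝ → ℝ≥0∞) {t : ℝ} (ht : 0 ≤ t) :
    inv1 A t * inv1 (conj1 A) t ≤ 2 * t := by
  set a := inv1 A t with ha
  set b := inv1 (conj1 A) t with hb
  have ha0 : 0 ≤ a := inv1_nonneg A t
  have hb0 : 0 ≤ b := inv1_nonneg (conj1 A) t
  by_contra hcon
  push_neg at hcon
  have hapos : 0 < a := by
    rcases eq_or_lt_of_le ha0 with h | h
    · exfalso; rw [← h, zero_mul] at hcon; linarith
    · exact h
  have hbpos : 0 < b := by
    rcases eq_or_lt_of_le hb0 with h | h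
    · exfalso; rw [← h, mul_zero] at hcon; linarith
    · exact h
  have hdiv : 2 * t / b < a := (div_lt_iff₀ hbpos).2 (by linarith)
  obtain ⟨τ, hτ1, hτ2⟩ := exists_between (max_lt hdiv hapos)
  have hτpos : 0 < τ := lt_of_le_of_lt (le_max_right (2*t/b) 0) hτ1
  have hστ : 2 * t / b < τ := lt_of_le_of_lt (le_max_left _ _) hτ1
  set σ := 2 * t / τ with hσ
  have hσ0 : 0 ≤ σ := by positivity
  have hσb : σ < b := by
    rw [hσ, div_lt_iff₀ hτpos]
    calc 2 * t = (2 * t / b) * b := by field_simp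
      _ < τ * b := by exact mul_lt_mul_of_pos_right hστ hbpos
      _ = b * τ := mul_comm _ _
  have hAτ : A τ < ENNReal.ofReal t := lt_inv1 hτpos.le hτ2
  have hCσ : conj1 A σ < ENNReal.ofReal t := lt_inv1 hσ0 hσb
  have hy : ENNReal.ofReal (τ * σ) ≤ conj1 A σ + A τ := conj1_young hτpos.le
  have hlt : conj1 A σ + A τ < ENNReal.ofReal t + ENNReal.ofReal t :=
    ENNReal.add_lt_add hCσ hAτ
  have : ENNReal.ofReal (τ * σ) < ENNReal.ofReal (2 * t) := by
    rw [show (2:ℝ) * t = t + t by ring, ENNReal.ofReal_add ht ht]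
    exact lt_of_le_of_lt hy hlt
  have h2 : τ * σ < 2 * t :=
    lt_of_lt_of_le (not_le.1 fun hc => absurd (ENNReal.ofReal_le_ofReal hc) (not_le.2 this)) le_rfl
  rw [hσ] at h2
  have : τ * (2 * t / τ) = 2 * t := by field_simp
  rw [this] at h2
  exact lt_irrefl _ h2

/-- Claim 2: `t ≤ inv1 A t * inv1 (conj1 A) t`. -/
lemma le_inv1_mul_conj {A : ℝ → ℝ≥0∞} (hA : IsYoung A) {t : ℝ} (ht : 0 ≤ t) :
    t ≤ inv1 A t * inv1 (conj1 A) t := by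
  rcases eq_or_lt_of_le ht with h0 | htpos
  · rw [← h0]; exact mul_nonneg (inv1_nonneg _ _) (inv1_nonneg _ _)
  set a := inv1 A t with ha
  have hapos : 0 < a := inv1_pos hA htpos
  have haS : ENNReal.ofReal t ≤ A a := inv1_mem hA t
  -- the defining set for `inv1 (conj1 A) t` is nonempty
  have hne : ∃ σ : ℝ, 0 ≤ σ ∧ ENNReal.ofReal t ≤ conj1 A σ := by
    -- find τ₀ > 0 with A τ₀ < ∞
    have hc : ContinuousWithinAt A (Ici 0) 0 := hA.2.1 0 (mem_Ici.2 le_rfl)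
    have hmem : A ⁻¹' (Iio 1) ∈ 𝓝[Ici (0:ℝ)] 0 := hc (by rw [hA.1]; exact Iio_mem_nhds one_pos)
    obtain ⟨ε, hε, hball⟩ := Metric.mem_nhdsWithin_iff.1 hmem
    have hτ₀mem : ε / 2 ∈ Metric.ball (0:ℝ) ε ∩ Ici 0 := by
      constructor
      · rw [Metric.mem_ball, Real.dist_eq, sub_zero, abs_of_nonneg (by positivity)]
        linarith
      · exact mem_Ici.2 (by positivity)
    have hfin : A (ε / 2) < 1 := hball hτ₀mem
    set τ₀ := ε / 2 with hτ₀
    have hτ₀pos : 0 < τ₀ := by positivity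
    set c := (A τ₀).toReal with hcdef
    have hAτ₀ : A τ₀ = ENNReal.ofReal c := (ENNReal.ofReal_toReal (by
      exact ne_top_of_lt (lt_of_lt_of_le hfin le_top))).symm
    have hc0 : 0 ≤ c := ENNReal.toReal_nonneg
    refine ⟨(t + c + 1) / τ₀, by positivity, ?_⟩
    have hterm : ENNReal.ofReal (τ₀ * ((t + c + 1) / τ₀)) - A τ₀ ≤ conj1 A ((t + c + 1) / τ₀) :=
      le_iSup (fun τ' : {τ' : ℝ // 0 ≤ τ'} =>
        ENNReal.ofReal (τ'.1 * ((t + c + 1) / τ₀)) - A τ'.1) ⟨τ₀, hτ₀pos.le⟩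
    refine le_trans ?_ hterm
    have heq : τ₀ * ((t + c + 1) / τ₀) = t + c + 1 := by field_simp
    rw [heq, hAτ₀, ← ENNReal.ofReal_sub _ hc0]
    apply ENNReal.ofReal_le_ofReal
    linarith
  -- every element σ of the defining set satisfies t / a ≤ σ
  have hlb : ∀ σ : ℝ, 0 ≤ σ → ENNReal.ofReal t ≤ conj1 A σ → t / a ≤ σ := by
    intro σ hσ0 hσS
    by_contra hcon
    push_neg at hcon
    have hσa : σ * a < t := by
      calc σ * a < t / a * a := mul_lt_mul_of_pos_right hcon hapos
        _ = t := div_mul_cancel₀ t hapos.ne'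
    have hub : conj1 A σ ≤ ENNReal.ofReal (a * σ) := by
      apply iSup_le
      rintro ⟨s, hs0⟩
      rcases le_or_gt s a with hsa | hsa
      · calc ENNReal.ofReal (s * σ) - A s ≤ ENNReal.ofReal (s * σ) := tsub_le_self
          _ ≤ ENNReal.ofReal (a * σ) :=
            ENNReal.ofReal_le_ofReal (mul_le_mul_of_nonneg_right hsa hσ0)
      · -- s > a : the term vanishes
        have hspos : 0 < s := hapos.trans hsa
        have hkey := young_scale hA (θ := a / s) (s := s) (by positivity)
          (by rw [div_le_one hspos]; exact hsa.le) hspos.le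
        have heq : a / s * s = a := by field_simp
        rw [heq] at hkey
        have h2 : ENNReal.ofReal (s / a) * ENNReal.ofReal t ≤
            ENNReal.ofReal (s / a) * (ENNReal.ofReal (a / s) * A s) :=
          mul_le_mul_right (le_trans haS hkey) _
        have h3 : ENNReal.ofReal (s / a) * ENNReal.ofReal (a / s) = 1 := by
          rw [← ENNReal.ofReal_mul (by positivity),
            show s / a * (a / s) = 1 by field_simp]
          simp
        rw [← mul_assoc, h3, one_mul, ← ENNReal.ofReal_mul (by positivity)] at h2
        have h4 : ENNReal.ofReal (s * σ) ≤ A s := by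
          refine le_trans ?_ h2
          apply ENNReal.ofReal_le_ofReal
          have hσle : σ ≤ t / a := hcon.le
          calc s * σ ≤ s * (t / a) := mul_le_mul_of_nonneg_left hσle hs0
            _ = s / a * t := by ring
        rw [tsub_eq_zero_of_le h4]
        exact zero_le
    have : ENNReal.ofReal t ≤ ENNReal.ofReal (a * σ) := le_trans hσS hub
    have h5 : t ≤ a * σ := by
      by_contra h6
      push_neg at h6
      have h7 : ENNReal.ofReal (a * σ) < ENNReal.ofReal t :=
        (ENNReal.ofReal_lt_ofReal_iff_of_nonneg (by positivity)).2 h6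
      exact absurd this (not_le.2 h7)
    nlinarith [hσa, h5]
  have hbge : t / a ≤ inv1 (conj1 A) t := le_csInf hne (fun σ hσ => hlb σ hσ.1 hσ.2)
  calc t = a * (t / a) := by field_simp
    _ ≤ a * inv1 (conj1 A) t := mul_le_mul_of_nonneg_left hbge hapos.le

end Claims

section Core
variable {A B : ℝ → ℝ≥0∞} {β M t : ℝ}

/-- Core of property (i). -/
lemma core_one (hA : IsYoung A) (hB : IsYoung B) (hβ0 : 0 < β) (hM : 0 < M)
    (hC : ∀ s : ℝ, 0 ≤ s → s ≤ M → β * inv1 B s ≤ inv1 A s)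
    (ht0 : 0 ≤ t) (ht : t ≤ β * inv1 B M) : A t ≤ B (t / β) := by
  apply ENNReal.le_of_forall_nnreal_lt
  intro r hr
  rcases eq_or_lt_of_le (show (0:NNReal) ≤ r from zero_le) with hr0 | hr0
  · rw [← hr0]; exact zero_le
  set s := (r : ℝ) with hsdef
  have hs0 : 0 < s := hr0
  have hrs : (r : ℝ≥0∞) = ENNReal.ofReal s := (ENNReal.ofReal_coe_nnreal).symm
  have hAt : ENNReal.ofReal s ≤ A t := by rw [← hrs]; exact hr.le
  rcases le_or_gt s M with hsM | hsM
  · -- main case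
    have h1 : inv1 A s ≤ t := inv1_le ht0 hAt
    have h2 : β * inv1 B s ≤ inv1 A s := hC s hs0.le hsM
    have h3 : inv1 B s ≤ t / β := by
      rw [le_div_iff₀ hβ0]
      calc inv1 B s * β = β * inv1 B s := mul_comm _ _
        _ ≤ t := h2.trans h1
    have h4 : ENNReal.ofReal s ≤ B (inv1 B s) := inv1_mem hB s
    rw [← hrs] at h4
    exact h4.trans (young_mono hB (inv1_nonneg B s) h3)
  · -- impossible case: s > M
    exfalso
    have hTy : β * inv1 B M ≤ inv1 A M := hC M hM.le le_rfl
    have htA : t ≤ inv1 A M := ht.trans hTy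
    have hAM : A t ≤ ENNReal.ofReal M := by
      rcases eq_or_lt_of_le htA with heq | hlt
      · -- t = inv1 A M : use left-continuity
        rcases eq_or_lt_of_le ht0 with h0 | h0
        · rw [← h0, hA.1] at hAt
          simp only [nonpos_iff_eq_zero, ENNReal.ofReal_eq_zero] at hAt
          linarith
        · apply young_left_lim hA h0
          intro τ hτ0 hτt
          exact (lt_inv1 hτ0 (by rw [heq] at hτt; exact hτt)).le
      · exact (lt_inv1 ht0 hlt).le
    have : ENNReal.ofReal s ≤ ENNReal.ofReal M := hAt.trans hAM
    have hcon : s ≤ M := by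
      by_contra h6
      push_neg at h6
      exact absurd this (not_le.2 ((ENNReal.ofReal_lt_ofReal_iff hs0).2 h6))
    linarith

/-- Core of property (ii). -/
lemma core_two (hA : IsYoung A) (hB : IsYoung B) (hβ0 : 0 < β)
    (ht0 : 0 ≤ t) (hC : β * inv1 B t ≤ inv1 A t) :
    β / 2 * inv1 (conj1 A) t ≤ inv1 (conj1 B) t := by
  rcases eq_or_lt_of_le ht0 with h0 | htpos
  · rw [← h0, inv1_zero, inv1_zero, mul_zero]
  have haA : 0 < inv1 A t := inv1_pos hA htpos
  have haB : 0 < inv1 B t := inv1_pos hB htpos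
  have hbA : 0 ≤ inv1 (conj1 A) t := inv1_nonneg _ _
  have hbB : 0 ≤ inv1 (conj1 B) t := inv1_nonneg _ _
  have h1 : inv1 A t * inv1 (conj1 A) t ≤ 2 * t := inv1_mul_conj_le A ht0
  have h2 : t ≤ inv1 B t * inv1 (conj1 B) t := le_inv1_mul_conj hB ht0
  nlinarith [mul_le_mul_of_nonneg_right hC hbA, h1, h2, haB, hbB, hβ0]

/-- Core of property (iii). -/
lemma core_three (hA : IsYoung A) (hB : IsYoung B) (hβ0 : 0 < β) (hM : 0 < M)
    (hC : ∀ s : ℝ, 0 ≤ s → s ≤ M → β * inv1 A s ≤ inv1 B s)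
    (ht0 : 0 ≤ t) (ht : t ≤ β / 2 * inv1 (conj1 B) M) :
    conj1 A t ≤ conj1 B (2 / β * t) := by
  apply iSup_le
  rintro ⟨τ, hτ0⟩
  set T := inv1 A M with hT
  have hT0 : 0 < T := inv1_pos hA hM
  have hTA : ENNReal.ofReal M ≤ A T := inv1_mem hA M
  rcases le_or_gt τ T with hτT | hτT
  · -- small τ : use core_one with the roles of A and B exchanged
    have h5 : B (β * τ) ≤ A (β * τ / β) :=
      core_one hB hA hβ0 hM hC (by positivity)
        (mul_le_mul_of_nonneg_left hτT hβ0.le)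
    rw [show β * τ / β = τ by field_simp] at h5
    have hterm : ENNReal.ofReal (β * τ * (2 / β * t)) - B (β * τ) ≤ conj1 B (2 / β * t) :=
      le_iSup (fun τ' : {τ' : ℝ // 0 ≤ τ'} =>
        ENNReal.ofReal (τ'.1 * (2 / β * t)) - B τ'.1) ⟨β * τ, by positivity⟩
    refine le_trans ?_ hterm
    have heq : β * τ * (2 / β * t) = 2 * (τ * t) := by field_simp
    rw [heq]
    refine le_trans (tsub_le_tsub_left h5 _) (tsub_le_tsub_right ?_ _)
    apply ENNReal.ofReal_le_ofReal
    nlinarith [mul_nonneg hτ0 ht0]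
  · -- large τ : the term is zero
    have hτpos : 0 < τ := hT0.trans hτT
    suffices h : ENNReal.ofReal (τ * t) ≤ A τ by
      rw [tsub_eq_zero_of_le h]; exact zero_le
    -- step 1 : A τ ≥ ofReal (M * (τ / T))
    have hkey := young_scale hA (θ := T / τ) (s := τ) (by positivity)
      (by rw [div_le_one hτpos]; exact hτT.le) hτpos.le
    rw [show T / τ * τ = T by field_simp] at hkey
    have h2 : ENNReal.ofReal (τ / T) * ENNReal.ofReal M ≤
        ENNReal.ofReal (τ / T) * (ENNReal.ofReal (T / τ) * A τ) :=
      mul_le_mul_right (hTA.trans hkey) _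
    have h3 : ENNReal.ofReal (τ / T) * ENNReal.ofReal (T / τ) = 1 := by
      rw [← ENNReal.ofReal_mul (by positivity), show τ / T * (T / τ) = 1 by field_simp]
      simp
    rw [← mul_assoc, h3, one_mul, ← ENNReal.ofReal_mul (by positivity)] at h2
    refine le_trans ?_ h2
    apply ENNReal.ofReal_le_ofReal
    -- step 2 : τ * t ≤ τ / T * M, i.e. t * T ≤ M
    have hbB : 0 ≤ inv1 (conj1 B) M := inv1_nonneg _ _
    have hprod : inv1 B M * inv1 (conj1 B) M ≤ 2 * M := inv1_mul_conj_le B hM.le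
    have hc : β * T ≤ inv1 B M := hC M hM.le le_rfl
    have h6 : β * T * inv1 (conj1 B) M ≤ 2 * M :=
      le_trans (mul_le_mul_of_nonneg_right hc hbB) hprod
    have h7 : t * T ≤ M := by nlinarith [mul_le_mul_of_nonneg_right ht hT0.le]
    have h8 : t ≤ M / T := (le_div_iff₀ hT0).2 h7
    calc τ * t ≤ τ * (M / T) := mul_le_mul_of_nonneg_left h8 hτpos.le
      _ = τ / T * M := by ring

/-- reduction of the comparison condition to rational points -/
lemma core_rat (hA : IsYoung A) (hB : IsYoung B) (hβ0 : 0 < β) (hM : 0 < M)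
    (h : ∀ q : ℚ, 0 < (q:ℝ) → (q:ℝ) ≤ M → β * inv1 A (q:ℝ) ≤ inv1 B (q:ℝ)) :
    ∀ t : ℝ, 0 ≤ t → t ≤ M → β * inv1 A t ≤ inv1 B t := by
  intro t ht0 htM
  rcases eq_or_lt_of_le ht0 with h0 | htpos
  · rw [← h0, inv1_zero, mul_zero]; exact inv1_nonneg _ _
  set D := {x : ℝ | ∃ q : ℚ, 0 < (q:ℝ) ∧ (q:ℝ) < t ∧ x = inv1 A (q:ℝ)} with hD
  obtain ⟨q₀, hq₀0, hq₀t⟩ := exists_rat_btwn htpos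
  have hDne : D.Nonempty := ⟨inv1 A (q₀:ℝ), q₀, by exact_mod_cast hq₀0, hq₀t, rfl⟩
  have hub : ∀ x ∈ D, x ≤ 1 / β * inv1 B t := by
    rintro x ⟨q, hq0, hqt, rfl⟩
    have h1 := h q hq0 (hqt.le.trans htM)
    have h2 : inv1 B (q:ℝ) ≤ inv1 B t := inv1_mono hB hqt.le
    have h3 : β * (1 / β * inv1 B t) = inv1 B t := by field_simp
    exact (mul_le_mul_iff_right₀ hβ0).1 (by rw [h3]; exact h1.trans h2)
  have hbdd : BddAbove D := ⟨_, hub⟩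
  set τ := sSup D with hτ
  have hτ0 : 0 ≤ τ := le_trans (inv1_nonneg A (q₀:ℝ))
    (le_csSup hbdd ⟨q₀, by exact_mod_cast hq₀0, hq₀t, rfl⟩)
  have hAτ : ∀ q : ℚ, 0 < (q:ℝ) → (q:ℝ) < t → ENNReal.ofReal (q:ℝ) ≤ A τ := by
    intro q h1 h2
    exact le_trans (inv1_mem hA (q:ℝ)) (young_mono hA (inv1_nonneg A _)
      (le_csSup hbdd ⟨q, h1, h2, rfl⟩))
  have hAt : ENNReal.ofReal t ≤ A τ := by
    by_contra hlt
    push_neg at hlt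
    obtain ⟨q, hq0, hq1, hq2⟩ := ENNReal.lt_iff_exists_rat_btwn.1 hlt
    have hcast : ((Real.toNNReal (q:ℝ)) : ℝ≥0∞) = ENNReal.ofReal (q:ℝ) := rfl
    rw [hcast] at hq1 hq2
    have hqt : (q:ℝ) < t := (ENNReal.ofReal_lt_ofReal_iff htpos).1 hq2
    have hqpos : 0 < (q:ℝ) := by
      rcases eq_or_lt_of_le (show (0:ℝ) ≤ (q:ℝ) by exact_mod_cast hq0) with hh | hh
      · exfalso
        rw [← hh] at hq1
        simp at hq1
      · exact hh
    exact absurd (hAτ q hqpos hqt) (not_le.2 hq1)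
  have h5 : inv1 A t ≤ τ := inv1_le hτ0 hAt
  have h6 : τ ≤ 1 / β * inv1 B t := csSup_le hDne hub
  calc β * inv1 A t ≤ β * τ := mul_le_mul_of_nonneg_left h5 hβ0.le
    _ ≤ β * (1 / β * inv1 B t) := mul_le_mul_of_nonneg_left h6 hβ0.le
    _ = inv1 B t := by field_simp

end Core

section Main
variable {n : ℕ}

lemma gyInv_eq_inv1 (φ : Euc n → ℝ → ℝ≥0∞) (x : Euc n) : gyInv φ x = inv1 (φ x) := rfl

lemma gyConj_eq_conj1 (φ : Euc n → ℝ → ℝ≥0∞) (x : Euc n) : gyConj φ x = conj1 (φ x) := rfl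

lemma gyInv_conj_eq (φ : Euc n → ℝ → ℝ≥0∞) (x : Euc n) :
    gyInv (gyConj φ) x = inv1 (conj1 (φ x)) := rfl

/-- Swapping the order of the a.e. quantifiers in the comparison condition,
via essential suprema/infima (no measurability needed). -/
lemma swap_cond {μ : Measure (Euc n)} {φ : Euc n → ℝ → ℝ≥0∞} {β M : ℝ}
    (hβ0 : 0 < β) (hM : 0 < M)
    (hY : ∀ᵐ x ∂μ, IsYoung (φ x))
    (h : ∀ᵐ x ∂μ, ∀ᵐ y ∂μ, ∀ t : ℝ, 0 ≤ t → t ≤ M → β * gyInv φ x t ≤ gyInv φ y t) :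
    ∀ᵐ x ∂μ, ∀ᵐ y ∂μ, ∀ t : ℝ, 0 ≤ t → t ≤ M → β * gyInv φ y t ≤ gyInv φ x t := by
  have key : ∀ q : ℚ, ∀ᵐ x ∂μ, ∀ᵐ y ∂μ,
      (0 < (q:ℝ) → (q:ℝ) ≤ M → β * gyInv φ y (q:ℝ) ≤ gyInv φ x (q:ℝ)) := by
    intro q
    by_cases hq : 0 < (q:ℝ) ∧ (q:ℝ) ≤ M
    · obtain ⟨hq0, hqM⟩ := hq
      set G : Euc n → ℝ≥0∞ := fun x => ENNReal.ofReal (gyInv φ x (q:ℝ)) with hG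
      have hS : ∀ᵐ x ∂μ, G x ≤ essSup G μ := ENNReal.ae_le_essSup G
      have hI : ∀ᵐ x ∂μ, essInf G μ ≤ G x := ae_essInf_le
      have hSI : ENNReal.ofReal β * essSup G μ ≤ essInf G μ := by
        have h1 : ∀ᵐ x ∂μ, ENNReal.ofReal β * G x ≤ essInf G μ := by
          filter_upwards [h] with x hx
          refine le_essInf_of_ae_le _ ?_
          filter_upwards [hx] with y hy
          have h2 := hy (q:ℝ) hq0.le hqM
          rw [hG, ← ENNReal.ofReal_mul hβ0.le]
          exact ENNReal.ofReal_le_ofReal h2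
        calc ENNReal.ofReal β * essSup G μ
            = essSup (fun x => ENNReal.ofReal β * G x) μ := ENNReal.essSup_const_mul.symm
          _ ≤ essInf G μ := essSup_le_of_ae_le _ h1
      filter_upwards [hI] with x hx
      filter_upwards [hS] with y hy
      intro _ _
      have h3 : ENNReal.ofReal β * G y ≤ G x :=
        le_trans (mul_le_mul_right hy _) (le_trans hSI hx)
      rw [hG, ← ENNReal.ofReal_mul hβ0.le] at h3
      exact (ENNReal.ofReal_le_ofReal_iff (inv1_nonneg _ _)).1 h3
    · push_neg at hq
      apply ae_of_all
      intro x
      apply ae_of_all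
      intro y hq0 hqM
      exact absurd (hq hq0) (not_lt.2 hqM)
  have hall : ∀ᵐ x ∂μ, ∀ᵐ y ∂μ, ∀ q : ℚ,
      (0 < (q:ℝ) → (q:ℝ) ≤ M → β * gyInv φ y (q:ℝ) ≤ gyInv φ x (q:ℝ)) := by
    have h1 : ∀ᵐ x ∂μ, ∀ q : ℚ, ∀ᵐ y ∂μ,
        (0 < (q:ℝ) → (q:ℝ) ≤ M → β * gyInv φ y (q:ℝ) ≤ gyInv φ x (q:ℝ)) :=
      (ae_all_iff).2 key
    filter_upwards [h1] with x hx
    exact (ae_all_iff).2 hx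
  filter_upwards [hall, hY] with x hx hYx
  filter_upwards [hx, hY] with y hqs hYy
  have := core_rat hYy hYx hβ0 hM (fun q h1 h2 => hqs q h1 h2)
  exact this



theorem normalized_props
    (n : ℕ) (φ : Euc n → ℝ → ℝ≥0∞) (β : ℝ) (hφ : IsNormalizedGY φ β) :
    ∀ (c : Euc n) (r : ℝ), 0 < r →
      ∀ᵐ x ∂volume.restrict (ball c r), ∀ᵐ y ∂volume.restrict (ball c r),
        (∀ t : ℝ, 0 ≤ t → t ≤ β * gyInv φ y (((volume (ball c r)).toReal)⁻¹) →
          φ x t ≤ φ y (t / β)) ∧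
        (∀ t : ℝ, 0 ≤ t → t ≤ ((volume (ball c r)).toReal)⁻¹ →
          β / 2 * gyInv (gyConj φ) x t ≤ gyInv (gyConj φ) y t) ∧
        (∀ t : ℝ, 0 ≤ t →
          t ≤ β / 2 * gyInv (gyConj φ) y (((volume (ball c r)).toReal)⁻¹) →
          gyConj φ x t ≤ gyConj φ y (2 / β * t)) := by
  obtain ⟨⟨hYoung, hMeas⟩, hβ0, hβ1, hnorm1, hcond, hinfty⟩ := hφ
  intro c r hr
  set M : ℝ := ((volume (ball c r)).toReal)⁻¹ with hMdef
  have hM0 : 0 < M := by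
    have h1 : (0:ℝ≥0∞) < volume (ball c r) := measure_ball_pos _ _ hr
    have h2 : volume (ball c r) < ⊤ := measure_ball_lt_top
    exact inv_pos.2 (ENNReal.toReal_pos h1.ne' h2.ne)
  have hcond' := hcond c r hr
  have hYμ : ∀ᵐ x ∂(volume.restrict (ball c r)), IsYoung (φ x) := ae_restrict_of_ae hYoung
  have hswap := swap_cond hβ0 hM0 hYμ hcond'
  filter_upwards [hcond', hswap, hYμ] with x hQx hQx' hYx
  filter_upwards [hQx, hQx', hYμ] with y hQxy hQyx hYy
  rw [gyInv_eq_inv1, gyInv_eq_inv1] at hQxy hQyx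
  refine ⟨?_, ?_, ?_⟩
  · intro t ht0 ht
    rw [gyInv_eq_inv1] at ht
    exact core_one hYx hYy hβ0 hM0 hQyx ht0 ht
  · intro t ht0 htM
    rw [gyInv_conj_eq, gyInv_conj_eq]
    exact core_two hYx hYy hβ0 ht0 (hQyx t ht0 htM)
  · intro t ht0 ht
    rw [gyInv_conj_eq] at ht
    rw [gyConj_eq_conj1, gyConj_eq_conj1]
    exact core_three hYx hYy hβ0 hM0 hQxy ht0 ht
end Main
end

section
/- (Lower bound for λ) Let n ≥ 1, α ∈ (0,n), and let φ be a normalized generalized Young function on ℝⁿ with constant β satisfying ∫₀ (t/φ_∞(t))^{α/(n−α)} dt < ∞ near 0. Fix k ≥ 4/β and σ ≥ ω_n max{2^{−n}, n/(n−α)}, and let ψ and λ be the associated functions. Then there exists a constant c, depending only on n, α and β, such that δ^α ≤ c λ(x,δ)/φ⁻¹(x, δ^{−n}) for every x ∈ ℝⁿ and δ > 0. -/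
open MeasureTheory Metric Filter Set
open scoped ENNReal Topology RealInnerProductSpace

section AuxLemmas

lemma gyInv_nonneg' (φ : Euc n → ℝ → ℝ≥0∞) (x : Euc n) (t : ℝ) : 0 ≤ gyInv φ x t :=
  Real.sInf_nonneg fun _ hτ => hτ.1

lemma psiInv_nonneg' (φ : Euc n → ℝ → ℝ≥0∞) (α k σ : ℝ) (x : Euc n) (s : ℝ) :
    0 ≤ psiInv φ α k σ x s :=
  Real.sInf_nonneg fun _ hτ => hτ.1

/-- The key pointwise estimate: `ψ⁻¹(x,s) · φ⁻¹(x,s) ≤ (2 + 4/σ) s`. -/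
lemma key_bound (n : ℕ) (α : ℝ) (hα0 : 0 < α) (hαn : α < n)
    (φ : Euc n → ℝ → ℝ≥0∞) (k σ : ℝ) (hk4 : 4 ≤ k) (hσ0 : 0 < σ)
    (x : Euc n) (s : ℝ) (hs : 0 < s) :
    psiInv φ α k σ x s * gyInv φ x s ≤ (2 + 4 / σ) * s := by
  have hnα : 0 < (n:ℝ) - α := sub_pos.mpr hαn
  set p : ℝ := (n:ℝ) / ((n:ℝ) - α) with hp
  have hp0 : 0 < p := div_pos (lt_trans hα0 hαn) hnα
  have hI0 : 0 ≤ psiInv φ α k σ x s := psiInv_nonneg' φ α k σ x s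
  have hr0 : 0 ≤ gyInv φ x s := gyInv_nonneg' φ x s
  rcases eq_or_lt_of_le hr0 with h0 | hrpos
  · rw [← h0, mul_zero]; positivity
  set r := gyInv φ x s with hrdef
  set s'' := max s (2 * s / σ) with hs''def
  have hs''pos : 0 < s'' := lt_max_of_lt_left hs
  have hss'' : s ≤ s'' := le_max_left _ _
  have h2s : 2 * s ≤ σ * s'' := by
    have h1 : 2 * s / σ ≤ s'' := le_max_right _ _
    have h2 : σ * (2 * s / σ) = 2 * s := by field_simp
    nlinarith
  -- Find `R > 0` with `r ≤ R` such that `gyConj x u ≥ s''` whenever `u ≥ 4 s'' / R`.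
  obtain ⟨R, hRpos, hrR, hconj⟩ :
      ∃ R : ℝ, 0 < R ∧ r ≤ R ∧
        ∀ u : ℝ, 4 * s'' / R ≤ u → ENNReal.ofReal s'' ≤ gyConj φ x u := by
    have hφlt : ∀ R : ℝ, 0 < R → φ x (R / 2) < ENNReal.ofReal s'' →
        ∀ u : ℝ, 4 * s'' / R ≤ u → ENNReal.ofReal s'' ≤ gyConj φ x u := by
      intro R hR hφR u hu
      have h1 : ENNReal.ofReal (R / 2 * u) - φ x (R / 2) ≤ gyConj φ x u :=
        le_iSup (fun τ : {τ : ℝ // 0 ≤ τ} => ENNReal.ofReal (τ.1 * u) - φ x τ.1)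
          ⟨R / 2, by positivity⟩
      refine le_trans ?_ h1
      refine le_trans ?_ (tsub_le_tsub_left hφR.le _)
      rw [← ENNReal.ofReal_sub _ hs''pos.le]
      apply ENNReal.ofReal_le_ofReal
      have h3 : 4 * s'' ≤ u * R := (div_le_iff₀ hR).mp hu
      nlinarith
    by_cases hne : {τ : ℝ | 0 ≤ τ ∧ ENNReal.ofReal s'' ≤ φ x τ}.Nonempty
    · set R := sInf {τ : ℝ | 0 ≤ τ ∧ ENNReal.ofReal s'' ≤ φ x τ} with hRdef
      have hbdd : BddBelow {τ : ℝ | 0 ≤ τ ∧ ENNReal.ofReal s'' ≤ φ x τ} :=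
        ⟨0, fun _ hy => hy.1⟩
      have hrR : r ≤ R := by
        rw [hrdef, gyInv]
        refine csInf_le_csInf ⟨0, fun _ hy => hy.1⟩ hne ?_
        intro τ hτ
        exact ⟨hτ.1, le_trans (ENNReal.ofReal_le_ofReal hss'') hτ.2⟩
      have hRpos : 0 < R := lt_of_lt_of_le hrpos hrR
      refine ⟨R, hRpos, hrR, hφlt R hRpos ?_⟩
      by_contra hcon
      push_neg at hcon
      have hmem : R / 2 ∈ {τ : ℝ | 0 ≤ τ ∧ ENNReal.ofReal s'' ≤ φ x τ} :=
        ⟨by positivity, hcon⟩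
      have := csInf_le hbdd hmem
      rw [← hRdef] at this
      linarith
    · refine ⟨max r 1, lt_of_lt_of_le one_pos (le_max_right _ _), le_max_left _ _,
        hφlt _ (lt_of_lt_of_le one_pos (le_max_right _ _)) ?_⟩
      by_contra hcon
      push_neg at hcon
      exact hne ⟨max r 1 / 2, ⟨by positivity, hcon⟩⟩
  -- The main estimate: `ψ(x, t₀) ≥ s` for `t₀ = 2 s'' / R`.
  set t₀ := 2 * s'' / R with ht₀def
  have ht₀ : 0 < t₀ := by positivity
  have htP : (0:ℝ) < t₀ ^ p := Real.rpow_pos_of_pos ht₀ p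
  have htP1 : (0:ℝ) < t₀ ^ (1 + p) := Real.rpow_pos_of_pos ht₀ _
  have hψ : ENNReal.ofReal s ≤ psiFun φ α k σ x t₀ := by
    have hle1 : ENNReal.ofReal s'' / ENNReal.ofReal t₀ ^ (1 + p) * ENNReal.ofReal (t₀ / 2) ≤
        ∫⁻ τ in Ioc (0:ℝ) t₀, gyConj φ x (k * τ) / ENNReal.ofReal τ ^ (1 + p) := by
      have hvol : volume (Ioc (t₀ / 2) t₀) = ENNReal.ofReal (t₀ / 2) := by
        rw [Real.volume_Ioc]
        congr 1
        ring
      calc ENNReal.ofReal s'' / ENNReal.ofReal t₀ ^ (1 + p) * ENNReal.ofReal (t₀ / 2)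
          = ∫⁻ _ in Ioc (t₀ / 2) t₀,
              ENNReal.ofReal s'' / ENNReal.ofReal t₀ ^ (1 + p) := by
            rw [setLIntegral_const, hvol]
        _ ≤ ∫⁻ τ in Ioc (t₀ / 2) t₀, gyConj φ x (k * τ) / ENNReal.ofReal τ ^ (1 + p) := by
            refine setLIntegral_mono' measurableSet_Ioc fun τ hτ => ?_
            have hτ1 : t₀ / 2 < τ := hτ.1
            have hτ2 : τ ≤ t₀ := hτ.2
            have hτpos : 0 < τ := lt_of_le_of_lt (by positivity) hτ1
            refine ENNReal.div_le_div ?_ ?_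
            · apply hconj
              have hk0 : 4 * τ ≤ k * τ := mul_le_mul_of_nonneg_right hk4 hτpos.le
              have ht2 : t₀ / 2 = s'' / R := by rw [ht₀def]; ring
              rw [ht2] at hτ1
              have h4 : 4 * s'' / R = 4 * (s'' / R) := by ring
              rw [h4]
              nlinarith
            · exact ENNReal.rpow_le_rpow (ENNReal.ofReal_le_ofReal hτ2) (by positivity)
        _ ≤ _ := lintegral_mono_set (Ioc_subset_Ioc_left (by positivity))
    calc ENNReal.ofReal s
        ≤ ENNReal.ofReal (σ * (t₀ ^ p * (s'' / t₀ ^ (1 + p) * (t₀ / 2)))) := by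
          apply ENNReal.ofReal_le_ofReal
          have hrp : t₀ ^ (1 + p) = t₀ * t₀ ^ p := by
            rw [Real.rpow_add ht₀, Real.rpow_one]
          rw [hrp]
          have heq : σ * (t₀ ^ p * (s'' / (t₀ * t₀ ^ p) * (t₀ / 2))) = σ * s'' / 2 := by
            field_simp
          rw [heq]
          linarith
      _ = ENNReal.ofReal σ * ENNReal.ofReal t₀ ^ p *
            (ENNReal.ofReal s'' / ENNReal.ofReal t₀ ^ (1 + p) * ENNReal.ofReal (t₀ / 2)) := by
          rw [ENNReal.ofReal_mul hσ0.le, ENNReal.ofReal_mul (by positivity),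
            ENNReal.ofReal_mul (by positivity), ENNReal.ofReal_div_of_pos htP1,
            ENNReal.ofReal_rpow_of_pos ht₀, ENNReal.ofReal_rpow_of_pos ht₀, ← mul_assoc]
      _ ≤ psiFun φ α k σ x t₀ := by
          rw [psiFun, ← hp]
          exact mul_le_mul_right hle1 _
  have hψinv : psiInv φ α k σ x s ≤ t₀ := by
    rw [psiInv]
    exact csInf_le ⟨0, fun _ hy => hy.1⟩ ⟨ht₀.le, hψ⟩
  calc psiInv φ α k σ x s * r ≤ t₀ * r :=
        mul_le_mul_of_nonneg_right hψinv hr0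
    _ ≤ t₀ * R := mul_le_mul_of_nonneg_left hrR ht₀.le
    _ = 2 * s'' := by rw [ht₀def]; field_simp
    _ ≤ (2 + 4 / σ) * s := by
        have hb : (0:ℝ) ≤ 2 * s / σ := by positivity
        have hmax : s'' ≤ s + 2 * s / σ := max_le (by linarith) (by linarith)
        have heq : (2 + 4 / σ) * s = 2 * (s + 2 * s / σ) := by
          field_simp
          ring
        rw [heq]
        linarith

end AuxLemmas

theorem lambda_lower_bound
    (n : ℕ) (hn : 1 ≤ n) (α : ℝ) (hα0 : 0 < α) (hαn : α < n)
    (φ : Euc n → ℝ → ℝ≥0∞) (β : ℝ) (hφ : IsNormalizedGY φ β)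
    (hconv : ConvCondZero φ (α / ((n:ℝ) - α)))
    (k σ : ℝ) (hk : 4 / β ≤ k)
    (hσ : omegaN n * max (1 / 2 ^ n) ((n:ℝ) / ((n:ℝ) - α)) ≤ σ) :
    ∃ c : ℝ, 0 < c ∧ ∀ (x : Euc n) (δ : ℝ), 0 < δ →
      ENNReal.ofReal (δ ^ α) ≤
        ENNReal.ofReal c * lamFun φ α k σ x δ /
          ENNReal.ofReal (gyInv φ x (δ ^ (-(n:ℝ)))) := by
  obtain ⟨hGY, hβ0, hβ1, -, -, -⟩ := hφ
  have hnα : 0 < (n:ℝ) - α := sub_pos.mpr hαn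
  have hω : 0 < omegaN n := by
    rw [omegaN]
    exact ENNReal.toReal_pos (measure_ball_pos volume _ one_pos).ne' measure_ball_lt_top.ne
  set σ₀ : ℝ := omegaN n * max (1 / 2 ^ n) ((n:ℝ) / ((n:ℝ) - α)) with hσ₀def
  have hσ₀pos : 0 < σ₀ := mul_pos hω (lt_max_of_lt_left (by positivity))
  have hσpos : 0 < σ := lt_of_lt_of_le hσ₀pos hσ
  have hk4 : 4 ≤ k := by
    refine le_trans ?_ hk
    rw [le_div_iff₀ hβ0]
    nlinarith
  refine ⟨2 + 4 / σ₀, by positivity, ?_⟩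
  intro x δ hδ
  set s := δ ^ (-(n:ℝ)) with hsdef
  have hspos : 0 < s := Real.rpow_pos_of_pos hδ _
  have hkey : psiInv φ α k σ x s * gyInv φ x s ≤ (2 + 4 / σ₀) * s := by
    refine le_trans (key_bound n α hα0 hαn φ k σ hk4 hσpos x s hspos) ?_
    have h1 : 4 / σ ≤ 4 / σ₀ := div_le_div_of_nonneg_left (by norm_num) hσ₀pos hσ
    nlinarith
  have hI0 : 0 ≤ psiInv φ α k σ x s := psiInv_nonneg' φ α k σ x s
  have hr0 : 0 ≤ gyInv φ x s := gyInv_nonneg' φ x s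
  have hδα : (0:ℝ) ≤ δ ^ α := (Real.rpow_pos_of_pos hδ α).le
  rw [lamFun, if_pos hδ, lamFunPos]
  have hnum : ENNReal.ofReal (2 + 4 / σ₀) *
      (ENNReal.ofReal (δ ^ ((n:ℝ) - α) * psiInv φ α k σ x s))⁻¹ ≠ 0 :=
    mul_ne_zero (ENNReal.ofReal_pos.mpr (by positivity)).ne'
      (ENNReal.inv_ne_zero.mpr ENNReal.ofReal_ne_top)
  rw [ENNReal.le_div_iff_mul_le (Or.inr hnum) (Or.inl ENNReal.ofReal_ne_top),
    ← div_eq_mul_inv,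
    ENNReal.le_div_iff_mul_le (Or.inr (ENNReal.ofReal_pos.mpr (by positivity)).ne')
      (Or.inl ENNReal.ofReal_ne_top),
    ← ENNReal.ofReal_mul hδα, ← ENNReal.ofReal_mul (by positivity)]
  apply ENNReal.ofReal_le_ofReal
  have hδn : δ ^ α * δ ^ ((n:ℝ) - α) = δ ^ (n:ℝ) := by
    rw [← Real.rpow_add hδ]
    ring_nf
  have hδinv : δ ^ (n:ℝ) * δ ^ (-(n:ℝ)) = 1 := by
    rw [← Real.rpow_add hδ]
    simp
  calc δ ^ α * gyInv φ x s * (δ ^ ((n:ℝ) - α) * psiInv φ α k σ x s)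
      = (δ ^ α * δ ^ ((n:ℝ) - α)) * (psiInv φ α k σ x s * gyInv φ x s) := by ring
    _ = δ ^ (n:ℝ) * (psiInv φ α k σ x s * gyInv φ x s) := by rw [hδn]
    _ ≤ δ ^ (n:ℝ) * ((2 + 4 / σ₀) * s) := by
        apply mul_le_mul_of_nonneg_left hkey (Real.rpow_pos_of_pos hδ _).le
    _ = (2 + 4 / σ₀) * (δ ^ (n:ℝ) * δ ^ (-(n:ℝ))) := by rw [hsdef]; ring
    _ = 2 + 4 / σ₀ := by rw [hδinv, mul_one]
end

section
/- (Radial lower bound for Riesz potentials) Let n ≥ 1, α ∈ (0,n), and let g : [0,∞) → [0,∞) be a bounded measurable function with bounded support. Define f(x) = g(ω_n |x|ⁿ) for x ∈ ℝⁿ, where ω_n = |B(0,1)|. Then for every x ∈ ℝⁿ, I_α f(x) ≥ ω_n^{(n−α)/n} 2^{α−n} ∫_{ω_n|x|ⁿ}^{∞} g(s) s^{−(n−α)/n} ds. -/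
open MeasureTheory Metric Filter Set
open scoped ENNReal Topology RealInnerProductSpace

private lemma aux_integrableOn_norm_rpow {n : ℕ} (hn : 1 ≤ n) {p M : ℝ}
    (hp1 : -(n:ℝ) < p) (hp2 : p < 0) (hM : 0 ≤ M) :
    MeasureTheory.IntegrableOn (fun z : Euc n => ‖z‖ ^ p) (Metric.closedBall (0 : Euc n) M) := by
  haveI : Nonempty (Fin n) := Fin.pos_iff_nonempty.mp hn
  have hmeas : Measurable fun z : Euc n => ‖z‖ ^ p := by fun_prop
  refine ⟨hmeas.aestronglyMeasurable, ?_⟩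
  have hnn : ∀ z : Euc n, 0 ≤ ‖z‖ ^ p := fun z => Real.rpow_nonneg (norm_nonneg z) p
  rw [HasFiniteIntegral, lintegral_enorm_of_nonneg hnn,
    lintegral_eq_lintegral_meas_le _ (Filter.Eventually.of_forall hnn) hmeas.aemeasurable]
  set μ' := volume.restrict (Metric.closedBall (0 : Euc n) M) with hμ'
  calc ∫⁻ t in Ioi (0:ℝ), μ' {a | t ≤ ‖a‖ ^ p}
      ≤ ∫⁻ t in Ioc (0:ℝ) 1 ∪ Ioi (1:ℝ), μ' {a | t ≤ ‖a‖ ^ p} :=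
        lintegral_mono_set Ioi_subset_Ioc_union_Ioi
    _ ≤ (∫⁻ t in Ioc (0:ℝ) 1, μ' {a | t ≤ ‖a‖ ^ p}) + ∫⁻ t in Ioi (1:ℝ), μ' {a | t ≤ ‖a‖ ^ p} :=
        lintegral_union_le _ _ _
    _ < ⊤ := ENNReal.add_lt_top.2 ⟨?_, ?_⟩
  · calc (∫⁻ t in Ioc (0:ℝ) 1, μ' {a | t ≤ ‖a‖ ^ p})
        ≤ ∫⁻ _t in Ioc (0:ℝ) 1, volume (Metric.closedBall (0 : Euc n) M) := by
          refine lintegral_mono fun t => ?_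
          exact (measure_mono (subset_univ _)).trans (le_of_eq (Measure.restrict_apply_univ _))
      _ = volume (Metric.closedBall (0 : Euc n) M) * volume (Ioc (0:ℝ) 1) :=
          setLIntegral_const _ _
      _ < ⊤ := by
          refine ENNReal.mul_lt_top measure_closedBall_lt_top ?_
          simp [Real.volume_Ioc]
  · have hq : p⁻¹ * (n:ℝ) < -1 := by
      rw [inv_mul_eq_div, div_lt_iff_of_neg hp2]
      linarith
    have hbd : ∀ t ∈ Ioi (1:ℝ), μ' {a | t ≤ ‖a‖ ^ p}
        ≤ ENNReal.ofReal (t ^ (p⁻¹ * (n:ℝ))) * volume (Metric.ball (0 : Euc n) 1) := by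
      intro t ht
      have ht1 : (1:ℝ) < t := ht
      have ht0 : (0:ℝ) < t := lt_trans one_pos ht1
      have hsub : {a : Euc n | t ≤ ‖a‖ ^ p} ⊆ Metric.closedBall (0 : Euc n) (t ^ p⁻¹) := by
        intro a ha
        have ha0 : a ≠ 0 := by
          rintro rfl
          simp only [mem_setOf_eq, norm_zero, Real.zero_rpow hp2.ne] at ha
          linarith
        have hna : 0 < ‖a‖ := norm_pos_iff.mpr ha0
        exact mem_closedBall_zero_iff.mpr
          ((Real.le_rpow_inv_iff_of_neg hna ht0 hp2).mpr ha)
      calc μ' {a : Euc n | t ≤ ‖a‖ ^ p} ≤ volume {a : Euc n | t ≤ ‖a‖ ^ p} :=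
            Measure.restrict_apply_le _ _
        _ ≤ volume (Metric.closedBall (0 : Euc n) (t ^ p⁻¹)) := measure_mono hsub
        _ = ENNReal.ofReal ((t ^ p⁻¹) ^ Module.finrank ℝ (Euc n)) *
              volume (Metric.ball (0 : Euc n) 1) :=
            Measure.addHaar_closedBall _ _ (Real.rpow_nonneg ht0.le _)
        _ = ENNReal.ofReal (t ^ (p⁻¹ * (n:ℝ))) * volume (Metric.ball (0 : Euc n) 1) := by
            rw [finrank_euclideanSpace_fin, ← Real.rpow_natCast (t ^ p⁻¹) n,
              ← Real.rpow_mul ht0.le]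
    calc (∫⁻ t in Ioi (1:ℝ), μ' {a | t ≤ ‖a‖ ^ p})
        ≤ ∫⁻ t in Ioi (1:ℝ), ENNReal.ofReal (t ^ (p⁻¹ * (n:ℝ))) *
            volume (Metric.ball (0 : Euc n) 1) :=
          setLIntegral_mono' measurableSet_Ioi hbd
      _ = (∫⁻ t in Ioi (1:ℝ), ENNReal.ofReal (t ^ (p⁻¹ * (n:ℝ)))) *
            volume (Metric.ball (0 : Euc n) 1) :=
          lintegral_mul_const' _ _ measure_ball_lt_top.ne
      _ < ⊤ := ENNReal.mul_lt_top
          ((integrableOn_Ioi_rpow_of_lt hq one_pos).setLIntegral_lt_top) measure_ball_lt_top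

theorem riesz_radial_lower_bound
    (n : ℕ) (hn : 1 ≤ n) (α : ℝ) (hα0 : 0 < α) (hαn : α < n)
    (g : ℝ → ℝ) (hg0 : ∀ s, 0 ≤ g s) (hgm : Measurable g)
    (hgb : ∃ C : ℝ, ∀ s, g s ≤ C) (hgs : ∃ R : ℝ, ∀ s, R ≤ s → g s = 0) :
    ∀ x : Euc n,
      omegaN n ^ (((n:ℝ) - α) / (n:ℝ)) * 2 ^ (α - (n:ℝ)) *
        ∫ s in Ioi (omegaN n * ‖x‖ ^ (n:ℝ)), g s * s ^ (-(((n:ℝ) - α) / (n:ℝ))) ≤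
      rieszPot α (fun y => g (omegaN n * ‖y‖ ^ (n:ℝ))) x := by
  classical
  intro x
  haveI : Nonempty (Fin n) := Fin.pos_iff_nonempty.mp hn
  obtain ⟨C, hC⟩ := hgb
  obtain ⟨R, hR⟩ := hgs
  have hn0 : (0:ℝ) < (n:ℝ) := by exact_mod_cast hn
  have hNne : ((n:ℝ)) ≠ 0 := hn0.ne'
  set ω : ℝ := omegaN n with hωdef
  have hω0 : 0 < ω := by
    rw [hωdef, omegaN]
    exact ENNReal.toReal_pos (measure_ball_pos volume 0 one_pos).ne' measure_ball_lt_top.ne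
  set p : ℝ := α - (n:ℝ) with hpdef
  have hp0 : p < 0 := by rw [hpdef]; linarith
  have hpn : -(n:ℝ) < p := by rw [hpdef]; linarith
  set q : ℝ := -(((n:ℝ) - α) / (n:ℝ)) with hqdef
  have hNq : (n:ℝ) * q = p := by rw [hqdef, hpdef]; field_simp; ring
  set b : ℝ := ‖x‖ ^ ((n:ℝ)) with hbdef
  have hb0 : 0 ≤ b := Real.rpow_nonneg (norm_nonneg x) _
  -- the radial minorant
  set J : ℝ → ℝ := fun s => (((n:ℝ))⁻¹ * (2:ℝ) ^ p) * ((s / ω) ^ q * g s) with hJdef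
  set H : ℝ → ℝ := fun u => J (ω * u) with hHdef
  set G : ℝ → ℝ := (Ioi b).indicator H with hGdef
  set F : ℝ → ℝ := fun r => if ‖x‖ < r then (2:ℝ) ^ p * r ^ p * g (ω * r ^ ((n:ℝ))) else 0
    with hFdef
  -- the integrand of the Riesz potential
  set h : Euc n → ℝ := fun y => g (ω * ‖y‖ ^ ((n:ℝ))) / ‖x - y‖ ^ ((n:ℝ) - α) with hhdef
  have hhm : Measurable h := by
    apply Measurable.div
    · exact hgm.comp (by fun_prop)
    · fun_prop
  have hdiv : ∀ y : Euc n, h y = g (ω * ‖y‖ ^ ((n:ℝ))) * ‖x - y‖ ^ p := by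
    intro y
    rw [hhdef, hpdef]
    dsimp only
    rw [div_eq_mul_inv, ← Real.rpow_neg (norm_nonneg _), neg_sub]
  have hh0 : ∀ y, 0 ≤ h y := fun y =>
    div_nonneg (hg0 _) (Real.rpow_nonneg (norm_nonneg _) _)
  -- pointwise bound F ‖y‖ ≤ h y
  have hF0 : ∀ r : ℝ, 0 ≤ F r := by
    intro r
    rw [hFdef]
    dsimp only
    split_ifs with hr
    · have h2 : (0:ℝ) ≤ (2:ℝ) ^ p := Real.rpow_nonneg (by norm_num) _
      have h3 : (0:ℝ) ≤ r ^ p := Real.rpow_nonneg (le_trans (norm_nonneg x) hr.le) _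
      exact mul_nonneg (mul_nonneg h2 h3) (hg0 _)
    · exact le_rfl
  have hFh : ∀ y : Euc n, F ‖y‖ ≤ h y := by
    intro y
    rw [hFdef]
    dsimp only
    split_ifs with hxy
    · rw [hdiv y]
      have hy0 : (0:ℝ) < ‖y‖ := lt_of_le_of_lt (norm_nonneg x) hxy
      have hne : x ≠ y := fun e => by rw [e] at hxy; exact lt_irrefl _ hxy
      have hsub : (0:ℝ) < ‖x - y‖ := norm_sub_pos_iff.mpr hne
      have h2y : ‖x - y‖ ≤ 2 * ‖y‖ := (norm_sub_le x y).trans (by linarith)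
      have hkey : (2 * ‖y‖) ^ p ≤ ‖x - y‖ ^ p :=
        Real.rpow_le_rpow_of_nonpos hsub h2y hp0.le
      rw [Real.mul_rpow (by norm_num) (norm_nonneg y)] at hkey
      calc (2:ℝ) ^ p * ‖y‖ ^ p * g (ω * ‖y‖ ^ ((n:ℝ)))
          ≤ ‖x - y‖ ^ p * g (ω * ‖y‖ ^ ((n:ℝ))) :=
            mul_le_mul_of_nonneg_right hkey (hg0 _)
        _ = g (ω * ‖y‖ ^ ((n:ℝ))) * ‖x - y‖ ^ p := mul_comm _ _
    · exact hh0 y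
  -- integrability of h
  set C' : ℝ := max C 0 with hC'def
  have hC'0 : 0 ≤ C' := le_max_right _ _
  have hgC' : ∀ s, g s ≤ C' := fun s => le_trans (hC s) (le_max_left _ _)
  set R' : ℝ := max R 0 with hR'def
  have hR'0 : 0 ≤ R' := le_max_right _ _
  set ρ : ℝ := (R' / ω) ^ (((n:ℝ))⁻¹) with hρdef
  have hρ0 : 0 ≤ ρ := Real.rpow_nonneg (div_nonneg hR'0 hω0.le) _
  set M : ℝ := ‖x‖ + ρ with hMdef
  have hM0 : 0 ≤ M := add_nonneg (norm_nonneg x) hρ0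
  have hsupp : ∀ y : Euc n, ρ ≤ ‖y‖ → g (ω * ‖y‖ ^ ((n:ℝ))) = 0 := by
    intro y hy
    apply hR
    have h1 : ρ ^ ((n:ℝ)) ≤ ‖y‖ ^ ((n:ℝ)) := Real.rpow_le_rpow hρ0 hy hn0.le
    have h2 : ρ ^ ((n:ℝ)) = R' / ω := by
      rw [hρdef, ← Real.rpow_mul (div_nonneg hR'0 hω0.le),
        inv_mul_cancel₀ hNne, Real.rpow_one]
    rw [h2] at h1
    have h3 : R' ≤ ω * ‖y‖ ^ ((n:ℝ)) := by
      have := mul_le_mul_of_nonneg_left h1 hω0.le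
      rwa [mul_div_cancel₀ _ hω0.ne'] at this
    exact le_trans (le_max_left R 0) h3
  set Gind : Euc n → ℝ := (Metric.closedBall (0 : Euc n) M).indicator (fun z => ‖z‖ ^ p)
    with hGinddef
  have hGind0 : ∀ z, 0 ≤ Gind z :=
    fun z => Set.indicator_nonneg (fun z _ => Real.rpow_nonneg (norm_nonneg z) _) z
  have hGint : Integrable (fun y : Euc n => C' * Gind (x - y)) volume := by
    have h1 : Integrable Gind volume :=
      (aux_integrableOn_norm_rpow hn hpn hp0 hM0).integrable_indicator
        Metric.isClosed_closedBall.measurableSet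
    have h2 : Integrable (Gind ∘ fun y : Euc n => x - y) volume :=
      ((Measure.measurePreserving_sub_left volume x).integrable_comp
        h1.aestronglyMeasurable).mpr h1
    exact h2.const_mul C'
  have hbound : ∀ y : Euc n, ‖h y‖ ≤ C' * Gind (x - y) := by
    intro y
    rw [Real.norm_eq_abs, abs_of_nonneg (hh0 y)]
    by_cases hy : ρ ≤ ‖y‖
    · rw [hdiv y, hsupp y hy, zero_mul]
      exact mul_nonneg hC'0 (hGind0 _)
    · push_neg at hy
      have hxy : ‖x - y‖ ≤ M := (norm_sub_le x y).trans (by rw [hMdef]; linarith)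
      have hmem : x - y ∈ Metric.closedBall (0 : Euc n) M :=
        mem_closedBall_zero_iff.mpr hxy
      rw [hGinddef, Set.indicator_of_mem hmem, hdiv y]
      exact mul_le_mul_of_nonneg_right (hgC' _) (Real.rpow_nonneg (norm_nonneg _) _)
  have hint_h : Integrable h volume :=
    hGint.mono' hhm.aestronglyMeasurable (Filter.Eventually.of_forall hbound)
  -- integrability of the minorant
  have hFmeas : Measurable fun y : Euc n => F ‖y‖ := by
    rw [hFdef]
    apply Measurable.ite
    · exact measurableSet_lt measurable_const measurable_norm
    · exact ((measurable_const.mul (measurable_norm.pow_const _)).mul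
        (hgm.comp (by fun_prop)))
    · exact measurable_const
  have hint_F : Integrable (fun y : Euc n => F ‖y‖) volume := by
    refine hint_h.mono hFmeas.aestronglyMeasurable (Filter.Eventually.of_forall fun y => ?_)
    rw [Real.norm_eq_abs, Real.norm_eq_abs, abs_of_nonneg (hF0 _), abs_of_nonneg (hh0 _)]
    exact hFh y
  -- the exact computation of ∫ F ‖y‖
  have hs1 : ∀ r ∈ Ioi (0:ℝ),
      r ^ (n - 1) • F r = ((n:ℝ) * r ^ ((n:ℝ) - 1)) • G (r ^ ((n:ℝ))) := by
    intro r hr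
    have hr0 : (0:ℝ) < r := hr
    have hnat : r ^ (n - 1) = r ^ ((n:ℝ) - 1) := by
      rw [← Real.rpow_natCast r (n - 1), Nat.cast_sub hn, Nat.cast_one]
    have hcond : b < r ^ ((n:ℝ)) ↔ ‖x‖ < r := by
      rw [hbdef, Real.rpow_natCast, Real.rpow_natCast]
      exact pow_lt_pow_iff_left₀ (norm_nonneg x) hr0.le (by omega)
    have hrq : (r ^ ((n:ℝ))) ^ q = r ^ p := by
      rw [← Real.rpow_mul hr0.le, hNq]
    rw [hGdef]
    by_cases hxr : ‖x‖ < r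
    · rw [Set.indicator_of_mem (mem_Ioi.mpr (hcond.mpr hxr)), hFdef, hHdef, hJdef]
      dsimp only
      rw [if_pos hxr, mul_div_cancel_left₀ _ hω0.ne', hrq, hnat, smul_eq_mul, smul_eq_mul]
      have hrp : r ^ ((n:ℝ) - 1) = r ^ ((n:ℝ)) / r := by
        rw [Real.rpow_sub hr0, Real.rpow_one]
      field_simp
    · rw [Set.indicator_of_notMem (by rwa [mem_Ioi, hcond]), hFdef]
      dsimp only
      rw [if_neg hxr]
      simp
  have hkey : (∫ y : Euc n, F ‖y‖) =
      ω ^ (((n:ℝ) - α) / (n:ℝ)) * 2 ^ (α - (n:ℝ)) *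
        ∫ s in Ioi (ω * ‖x‖ ^ ((n:ℝ))), g s * s ^ (-(((n:ℝ) - α) / (n:ℝ))) := by
    have hpolar := integral_fun_norm_addHaar (volume : Measure (Euc n)) F
    rw [finrank_euclideanSpace_fin] at hpolar
    have hΩ : volume.real (ball (0 : Euc n) 1) = ω := rfl
    rw [hΩ] at hpolar
    rw [hpolar, setIntegral_congr_fun measurableSet_Ioi hs1,
      integral_comp_rpow_Ioi_of_pos hn0 (g := G), hGdef,
      setIntegral_indicator measurableSet_Ioi, Ioi_inter_Ioi, sup_eq_right.mpr hb0]
    have hHJ : (∫ u in Ioi b, H u) = ∫ u in Ioi b, J (ω * u) := rfl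
    rw [hHJ, integral_comp_mul_left_Ioi J b hω0]
    have hcongr : ∀ s ∈ Ioi (ω * b),
        J s = (((n:ℝ))⁻¹ * (2:ℝ) ^ p * (ω ^ q)⁻¹) * (g s * s ^ q) := by
      intro s hs
      have hs0 : 0 ≤ s := le_of_lt (lt_of_le_of_lt (mul_nonneg hω0.le hb0) hs)
      rw [hJdef]
      dsimp only
      rw [Real.div_rpow hs0 hω0.le, div_eq_mul_inv]
      ring
    rw [setIntegral_congr_fun measurableSet_Ioi hcongr, integral_const_mul]
    have hωq : (ω ^ q)⁻¹ = ω ^ (((n:ℝ) - α) / (n:ℝ)) := by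
      rw [← Real.rpow_neg hω0.le, hqdef, neg_neg]
    have h2p : (2:ℝ) ^ p = 2 ^ (α - (n:ℝ)) := by rw [hpdef]
    rw [smul_eq_mul, nsmul_eq_mul, smul_eq_mul, hωq, h2p]
    have hIeq : (∫ s in Ioi (ω * b), g s * s ^ q)
        = ∫ s in Ioi (ω * ‖x‖ ^ ((n:ℝ))), g s * s ^ (-(((n:ℝ) - α) / (n:ℝ))) := by
      rw [hbdef, hqdef]
    rw [hIeq]
    field_simp
  -- conclusion
  have hfinal : (∫ y : Euc n, F ‖y‖) ≤ ∫ y : Euc n, h y :=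
    integral_mono hint_F hint_h hFh
  calc omegaN n ^ (((n:ℝ) - α) / (n:ℝ)) * 2 ^ (α - (n:ℝ)) *
        ∫ s in Ioi (omegaN n * ‖x‖ ^ (n:ℝ)), g s * s ^ (-(((n:ℝ) - α) / (n:ℝ)))
      = ∫ y : Euc n, F ‖y‖ := hkey.symm
    _ ≤ ∫ y : Euc n, h y := hfinal
    _ = rieszPot α (fun y => g (omegaN n * ‖y‖ ^ (n:ℝ))) x := by
        rw [rieszPot, hhdef, hωdef]
end
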